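/- arXiv:1603.09232 — 2 statements merged into one kernel-verified Lean document; each statement's English description precedes it below -/
import Mathlib

section
/- The function h(x) := x/P'(x)^{k−1} − Q(x) has exactly one zero in the open interval (0,1). Equivalently, the equation α = Q(α)·P'(α)^{k−1} has a unique root α_end with 0 < α_end < 1. -/
open Finset

/-- The generating polynomial `P(x) = ∑_{i=1}^Δ ζ_i x^i` of the degree sequence. -/
noncomputable def Ppoly (Δ : ℕ) (ζ : ℕ → ℝ) (x : ℝ) : ℝ :=
  ∑ i ∈ Finset.Icc 1 Δ, ζ i * x ^ i

/-- The derivative `P'(x) = ∑_{i=1}^Δ i ζ_i x^{i-1}`. -/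
noncomputable def Pderiv (Δ : ℕ) (ζ : ℕ → ℝ) (x : ℝ) : ℝ :=
  ∑ i ∈ Finset.Icc 1 Δ, ζ i * i * x ^ (i - 1)

/-- The second derivative `P''(x) = ∑_{i=1}^Δ i(i-1) ζ_i x^{i-2}`. -/
noncomputable def Pderiv2 (Δ : ℕ) (ζ : ℕ → ℝ) (x : ℝ) : ℝ :=
  ∑ i ∈ Finset.Icc 1 Δ, ζ i * i * (i - 1) * x ^ (i - 2)

/-- `Q(x) = ∫_x^1 (k-1) w P''(w) / P'(w)^k dw`. -/
noncomputable def Qfun (k Δ : ℕ) (ζ : ℕ → ℝ) (x : ℝ) : ℝ :=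
  ∫ w in x..1, ((k : ℝ) - 1) * w * Pderiv2 Δ ζ w / (Pderiv Δ ζ w) ^ k

/-- `h(x) = x / P'(x)^{k-1} - Q(x)`. -/
noncomputable def hfun (k Δ : ℕ) (ζ : ℕ → ℝ) (x : ℝ) : ℝ :=
  x / (Pderiv Δ ζ x) ^ (k - 1) - Qfun k Δ ζ x

/-!
Because `Q'(x) = -(k-1) x P''(x) / P'(x)^k`, the two terms of `h'` cancel except for
`h'(x) = 1 / P'(x)^{k-1} > 0`, so `h` is strictly increasing on `(0, 1]` and
`h(1) = 1 / P'(1)^{k-1} > 0`. Since `P'` is strictly increasing, `h'(x) > h'(1) = h(1)` on `(0, 1)`,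
so `h(x) - x h(1)` is strictly increasing as well; it is therefore at most
`h(1/2) - h(1)/2 < 0` on `(0, 1/2]`, which makes `h` negative near `0`, and the intermediate
value theorem produces the zero.
-/

theorem existsUnique_zero_of_strictMonoOn_Ioc {f : ℝ → ℝ} {a b : ℝ}
    (hmono : StrictMonoOn f (Set.Ioc a b)) (hcont : ContinuousOn f (Set.Ioc a b))
    (hneg : ∃ x ∈ Set.Ioo a b, f x < 0) (hpos : 0 < f b) : ∃! x, x ∈ Set.Ioo a b ∧ f x = 0 := by
  obtain ⟨x₀, hx₀, hfx₀⟩ := hneg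
  obtain ⟨x, hx, hfx⟩ := intermediate_value_Ioo hx₀.2.le
    (hcont.mono fun y hy => ⟨hx₀.1.trans_le hy.1, hy.2⟩) ⟨hfx₀, hpos⟩
  refine ⟨x, ⟨⟨hx₀.1.trans hx.1, hx.2⟩, hfx⟩, fun y ⟨hy, hfy⟩ => ?_⟩
  exact hmono.injOn (Set.Ioo_subset_Ioc_self hy) ⟨hx₀.1.trans hx.1, hx.2.le⟩ (hfy.trans hfx.symm)

theorem exists_neg_of_strictMonoOn_sub_mul {f : ℝ → ℝ} (h1 : 0 < f 1)
    (hf : StrictMonoOn (fun x => f x - x * f 1) (Set.Ioc 0 1)) : ∃ x ∈ Set.Ioo 0 1, f x < 0 := by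
  set c := 1 / 2 * f 1 - f (1 / 2) with hc_def
  have hc : 0 < c := by
    have hhalf := hf ⟨by norm_num, by norm_num⟩ ⟨one_pos, le_rfl⟩ (by norm_num : (1 / 2 : ℝ) < 1)
    simp only [one_mul, sub_self] at hhalf
    linarith
  set x₀ := min (1 / 2) (c / (2 * f 1))
  have hx₀ : 0 < x₀ := lt_min (by norm_num) (by positivity)
  have hx₀half : x₀ ≤ 1 / 2 := min_le_left _ _
  have hx₀c : x₀ * f 1 ≤ c / 2 := by
    calc x₀ * f 1 ≤ c / (2 * f 1) * f 1 := by gcongr; exact min_le_right _ _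
      _ = c / 2 := by field_simp
  refine ⟨x₀, ⟨hx₀, by linarith⟩, ?_⟩
  have hle_half := hf.monotoneOn ⟨hx₀, by linarith⟩ ⟨by norm_num, by norm_num⟩ hx₀half
  linarith

section Pderiv

variable {Δ : ℕ} {ζ : ℕ → ℝ}

theorem hasDerivAt_Pderiv (x : ℝ) : HasDerivAt (Pderiv Δ ζ) (Pderiv2 Δ ζ x) x := by
  refine HasDerivAt.fun_sum fun i hi => ?_
  have hi1 : 1 ≤ i := (Finset.mem_Icc.mp hi).1
  refine ((hasDerivAt_pow (i - 1) x).const_mul (ζ i * i)).congr_deriv ?_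
  rw [Nat.cast_sub hi1, show i - 1 - 1 = i - 2 by omega]
  ring

theorem continuous_Pderiv : Continuous (Pderiv Δ ζ) :=
  continuous_iff_continuousAt.2 fun x => hasDerivAt_Pderiv x |>.continuousAt

theorem continuous_Pderiv2 : Continuous (Pderiv2 Δ ζ) := by
  unfold Pderiv2
  fun_prop

theorem Pderiv_pos (hΔ : 1 ≤ Δ) (hζ : ∀ i ∈ Finset.Icc 1 Δ, 0 ≤ ζ i) (hζΔ : 0 < ζ Δ)
    {x : ℝ} (hx : 0 < x) : 0 < Pderiv Δ ζ x := by
  refine Finset.sum_pos' (fun i hi => by have := hζ i hi; positivity)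
    ⟨Δ, Finset.mem_Icc.2 ⟨hΔ, le_rfl⟩, ?_⟩
  have : (0 : ℝ) < Δ := by exact_mod_cast hΔ
  positivity

theorem strictMonoOn_Pderiv (hΔ : 2 ≤ Δ) (hζ : ∀ i ∈ Finset.Icc 1 Δ, 0 ≤ ζ i)
    (hζΔ : 0 < ζ Δ) : StrictMonoOn (Pderiv Δ ζ) (Set.Ici 0) := by
  intro x hx y _ hxy
  refine Finset.sum_lt_sum (fun i hi => ?_) ⟨Δ, Finset.mem_Icc.2 ⟨by omega, le_rfl⟩, ?_⟩
  · have := hζ i hi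
    gcongr
  · have : (0 : ℝ) < Δ := by exact_mod_cast (by omega : 0 < Δ)
    have := pow_lt_pow_left₀ hxy hx (by omega : Δ - 1 ≠ 0)
    gcongr

end Pderiv

section hfun

variable {k Δ : ℕ} {ζ : ℕ → ℝ}

theorem continuousOn_Qfun_integrand (hΔ : 1 ≤ Δ) (hζ : ∀ i ∈ Finset.Icc 1 Δ, 0 ≤ ζ i)
    (hζΔ : 0 < ζ Δ) :
    ContinuousOn (fun w => ((k : ℝ) - 1) * w * Pderiv2 Δ ζ w / Pderiv Δ ζ w ^ k) (Set.Ioi 0) :=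
  ((continuous_const.mul continuous_id).mul continuous_Pderiv2).continuousOn.div
    (continuous_Pderiv.pow k).continuousOn fun _ hw => (pow_pos (Pderiv_pos hΔ hζ hζΔ hw) k).ne'

theorem hasDerivAt_Qfun (hΔ : 1 ≤ Δ) (hζ : ∀ i ∈ Finset.Icc 1 Δ, 0 ≤ ζ i) (hζΔ : 0 < ζ Δ)
    {x : ℝ} (hx : 0 < x) :
    HasDerivAt (Qfun k Δ ζ) (-(((k : ℝ) - 1) * x * Pderiv2 Δ ζ x / Pderiv Δ ζ x ^ k)) x := by
  have hcont := continuousOn_Qfun_integrand (k := k) hΔ hζ hζΔ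
  have hsub : Set.uIcc x 1 ⊆ Set.Ioi 0 := fun w hw => lt_of_lt_of_le (lt_min hx one_pos) hw.1
  exact intervalIntegral.integral_hasDerivAt_left ((hcont.mono hsub).intervalIntegrable)
    (hcont.stronglyMeasurableAtFilter isOpen_Ioi x hx) (hcont.continuousAt (Ioi_mem_nhds hx))

theorem hasDerivAt_hfun (hk : 1 ≤ k) (hΔ : 1 ≤ Δ) (hζ : ∀ i ∈ Finset.Icc 1 Δ, 0 ≤ ζ i)
    (hζΔ : 0 < ζ Δ) {x : ℝ} (hx : 0 < x) :
    HasDerivAt (hfun k Δ ζ) (Pderiv Δ ζ x ^ (k - 1))⁻¹ x := by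
  obtain ⟨m, rfl⟩ : ∃ m, k = m + 1 := ⟨k - 1, by omega⟩
  have hP := (Pderiv_pos hΔ hζ hζΔ hx).ne'
  show HasDerivAt (fun y => y / Pderiv Δ ζ y ^ m - Qfun (m + 1) Δ ζ y) _ x
  refine (((hasDerivAt_id x).fun_div ((hasDerivAt_Pderiv x).pow m) (pow_ne_zero m hP)).fun_sub
    (hasDerivAt_Qfun hΔ hζ hζΔ hx)).congr_deriv ?_
  rcases m with _ | m
  · simp
  · simp only [id, Pi.pow_apply, Nat.add_sub_cancel]
    push_cast
    field_simp
    ring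

theorem continuousOn_hfun (hk : 1 ≤ k) (hΔ : 1 ≤ Δ) (hζ : ∀ i ∈ Finset.Icc 1 Δ, 0 ≤ ζ i)
    (hζΔ : 0 < ζ Δ) : ContinuousOn (hfun k Δ ζ) (Set.Ioi 0) := fun _ hx =>
  (hasDerivAt_hfun hk hΔ hζ hζΔ hx).continuousAt.continuousWithinAt

theorem strictMonoOn_hfun (hk : 1 ≤ k) (hΔ : 1 ≤ Δ) (hζ : ∀ i ∈ Finset.Icc 1 Δ, 0 ≤ ζ i)
    (hζΔ : 0 < ζ Δ) : StrictMonoOn (hfun k Δ ζ) (Set.Ioi 0) := by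
  refine strictMonoOn_of_deriv_pos (convex_Ioi 0) (continuousOn_hfun hk hΔ hζ hζΔ) fun x hx => ?_
  rw [interior_Ioi] at hx
  rw [(hasDerivAt_hfun hk hΔ hζ hζΔ hx).deriv]
  exact inv_pos.2 (pow_pos (Pderiv_pos hΔ hζ hζΔ hx) _)

theorem hfun_one : hfun k Δ ζ 1 = (Pderiv Δ ζ 1 ^ (k - 1))⁻¹ := by
  simp [hfun, Qfun]

theorem strictMonoOn_hfun_sub_mul (hk : 2 ≤ k) (hΔ : 2 ≤ Δ)
    (hζ : ∀ i ∈ Finset.Icc 1 Δ, 0 ≤ ζ i) (hζΔ : 0 < ζ Δ) :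
    StrictMonoOn (fun x => hfun k Δ ζ x - x * hfun k Δ ζ 1) (Set.Ioc 0 1) := by
  have hderiv : ∀ x ∈ Set.Ioi (0 : ℝ), HasDerivAt (fun x => hfun k Δ ζ x - x * hfun k Δ ζ 1)
      ((Pderiv Δ ζ x ^ (k - 1))⁻¹ - hfun k Δ ζ 1) x := fun x hx => by
    simpa using (hasDerivAt_hfun (by omega) (by omega) hζ hζΔ hx).fun_sub
      ((hasDerivAt_id x).mul_const (hfun k Δ ζ 1))
  refine strictMonoOn_of_deriv_pos (convex_Ioc 0 1)
    (fun x hx => (hderiv x hx.1).continuousAt.continuousWithinAt) fun x hx => ?_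
  rw [interior_Ioc] at hx
  rw [(hderiv x hx.1).deriv, hfun_one, sub_pos]
  have hPx := Pderiv_pos (by omega) hζ hζΔ hx.1
  exact inv_strictAnti₀ (pow_pos hPx _) <| pow_lt_pow_left₀
    (strictMonoOn_Pderiv hΔ hζ hζΔ (Set.mem_Ici.2 hx.1.le) (Set.mem_Ici.2 zero_le_one) hx.2)
    hPx.le (by omega)

theorem hfun_eq_zero_iff (hΔ : 1 ≤ Δ) (hζ : ∀ i ∈ Finset.Icc 1 Δ, 0 ≤ ζ i) (hζΔ : 0 < ζ Δ)
    {x : ℝ} (hx : 0 < x) :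
    hfun k Δ ζ x = 0 ↔ x = Qfun k Δ ζ x * Pderiv Δ ζ x ^ (k - 1) := by
  rw [hfun, sub_eq_zero, div_eq_iff (pow_pos (Pderiv_pos hΔ hζ hζΔ hx) _).ne']

end hfun

theorem hfun_unique_zero_general (k Δ : ℕ) (hk : 2 ≤ k) (hΔ : 2 ≤ Δ) (ζ : ℕ → ℝ)
    (hζ : ∀ i ∈ Finset.Icc 1 Δ, 0 ≤ ζ i) (hζΔ : 0 < ζ Δ) :
    (∃! x, x ∈ Set.Ioo (0 : ℝ) 1 ∧ hfun k Δ ζ x = 0) ∧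
    (∃! α, α ∈ Set.Ioo (0 : ℝ) 1 ∧ α = Qfun k Δ ζ α * (Pderiv Δ ζ α) ^ (k - 1)) := by
  have hone : 0 < hfun k Δ ζ 1 :=
    hfun_one ▸ inv_pos.2 (pow_pos (Pderiv_pos (by omega) hζ hζΔ one_pos) _)
  have hzero : ∃! x, x ∈ Set.Ioo (0 : ℝ) 1 ∧ hfun k Δ ζ x = 0 :=
    existsUnique_zero_of_strictMonoOn_Ioc
      ((strictMonoOn_hfun (by omega) (by omega) hζ hζΔ).mono Set.Ioc_subset_Ioi_self)
      ((continuousOn_hfun (by omega) (by omega) hζ hζΔ).mono Set.Ioc_subset_Ioi_self)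
      (exists_neg_of_strictMonoOn_sub_mul hone (strictMonoOn_hfun_sub_mul hk hΔ hζ hζΔ)) hone
  refine ⟨hzero, (existsUnique_congr fun x => ?_).1 hzero⟩
  exact and_congr_right fun hx => hfun_eq_zero_iff (by omega) hζ hζΔ hx.1

/-- `h` has exactly one zero in `(0,1)`; equivalently, the equation
`α = Q(α) P'(α)^{k-1}` has a unique root `α_end ∈ (0,1)`. -/
theorem hfun_unique_zero (k Δ : ℕ) (hk : 2 ≤ k) (hΔ : 2 ≤ Δ) (ζ : ℕ → ℝ)
    (hζ : ∀ i ∈ Finset.Icc 1 Δ, 0 ≤ ζ i) (hζΔ : 0 < ζ Δ)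
    (hsum : ∑ i ∈ Finset.Icc 1 Δ, ζ i = 1) :
    (∃! x, x ∈ Set.Ioo (0 : ℝ) 1 ∧ hfun k Δ ζ x = 0) ∧
    (∃! α, α ∈ Set.Ioo (0 : ℝ) 1 ∧ α = Qfun k Δ ζ α * (Pderiv Δ ζ α) ^ (k - 1)) :=
  hfun_unique_zero_general k Δ hk hΔ ζ hζ hζΔ
end

section
/- Let s, m : [0,T] → ℝ be continuous with m(t) > 0 on [0,T], define A(t) := exp(−∫_0^t (1+s(τ))/m(τ) dτ) and B(t) := ∫_0^t s(τ)A(τ)/m(τ) dτ. Suppose z_1, …, z_Δ : [0,T] → ℝ satisfy z_Δ(t) = ζ_Δ·A(t)^Δ and, for 1 ≤ i < Δ, the recursion z_i(t) = A(t)^i·(ζ_i + ∫_0^t A(τ)^{−i}·(i+1)·s(τ)·z_{i+1}(τ)/m(τ) dτ). Then for every i = 1, …, Δ and every t ∈ [0,T]: z_i(t) = A(t)^i · Σ_{ℓ=i}^Δ ζ_ℓ·C(ℓ,i)·B(t)^{ℓ−i}, where C(ℓ,i) is the binomial coefficient 'ℓ choose i'. -/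
/-!
Write `f = s A / m`, so that `B` is the primitive of `f` vanishing at `0`; by substitution
`∫₀ᵗ B^k f = B(t)^{k+1}/(k+1)`. Inserting the closed form of `z_{i+1}` into the recursion, the
powers of `A` cancel and the integrand becomes `(i+1) ∑_ℓ ζ_ℓ C(ℓ,i+1) B^{ℓ-i-1} f`. Integrating
termwise and using `(i+1) C(ℓ,i+1) = (ℓ-i) C(ℓ,i)` gives the closed form of `z_i`, so the claim
follows by downward induction from `i = Δ`.
-/

open Set intervalIntegral

section Primitive

variable {f : ℝ → ℝ} {a b : ℝ}

theorem hasDerivAt_primitive_of_continuousOn (hf : ContinuousOn f (uIcc a b)) {x : ℝ}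
    (hx : x ∈ Ioo (min a b) (max a b)) : HasDerivAt (fun u => ∫ y in a..u, f y) (f x) x := by
  have hx' : x ∈ uIcc a b := Ioo_subset_Icc_self hx
  have hfx : ContinuousAt f x := hf.continuousAt (Icc_mem_nhds hx.1 hx.2)
  exact integral_hasDerivAt_right (hf.mono (uIcc_subset_uIcc_left hx')).intervalIntegrable
    ((hf.mono Ioo_subset_Icc_self).stronglyMeasurableAtFilter isOpen_Ioo x hx) hfx

theorem integral_primitive_pow_mul (hf : ContinuousOn f (uIcc a b)) (k : ℕ) :
    ∫ x in a..b, (∫ y in a..x, f y) ^ k * f x = (∫ y in a..b, f y) ^ (k + 1) / (k + 1) := by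
  have hF : ContinuousOn (fun x => ∫ y in a..x, f y) (uIcc a b) :=
    continuousOn_primitive_interval (hf.integrableOn_compact isCompact_uIcc)
  have := integral_comp_mul_deriv'' (g := fun u => u ^ k) hF
    (fun x hx => (hasDerivAt_primitive_of_continuousOn hf hx).hasDerivWithinAt) hf
    (continuous_pow k).continuousOn
  simpa [integral_pow] using this

theorem integral_choose_mul_primitive_pow_mul (hf : ContinuousOn f (uIcc a b)) {i ℓ : ℕ}
    (hiℓ : i < ℓ) :
    ∫ x in a..b, ((i : ℝ) + 1) * ℓ.choose (i + 1) * (∫ y in a..x, f y) ^ (ℓ - (i + 1)) * f x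
      = ℓ.choose i * (∫ y in a..b, f y) ^ (ℓ - i) := by
  have hℓ : ℓ - (i + 1) + 1 = ℓ - i := by omega
  have hchoose :
      ((i : ℝ) + 1) * ℓ.choose (i + 1) = ℓ.choose i * (((ℓ - (i + 1) : ℕ) : ℝ) + 1) := by
    norm_cast
    rw [hℓ, mul_comm]
    exact Nat.choose_succ_right_eq ℓ i
  simp_rw [hchoose, mul_assoc, integral_const_mul, integral_primitive_pow_mul hf, hℓ]
  field_simp

theorem integral_sum_choose_primitive_pow_mul (hf : ContinuousOn f (uIcc a b)) (c : ℕ → ℝ)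
    (i n : ℕ) :
    ∫ x in a..b, ((i : ℝ) + 1) *
        (∑ ℓ ∈ Finset.Ioc i n, c ℓ * ℓ.choose (i + 1) * (∫ y in a..x, f y) ^ (ℓ - (i + 1))) * f x
      = ∑ ℓ ∈ Finset.Ioc i n, c ℓ * ℓ.choose i * (∫ y in a..b, f y) ^ (ℓ - i) := by
  have hF : ContinuousOn (fun x => ∫ y in a..x, f y) (uIcc a b) :=
    continuousOn_primitive_interval (hf.integrableOn_compact isCompact_uIcc)
  have hterm : ∀ ℓ ∈ Finset.Ioc i n, IntervalIntegrable (fun x => c ℓ * (((i : ℝ) + 1) *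
      ℓ.choose (i + 1) * (∫ y in a..x, f y) ^ (ℓ - (i + 1)) * f x)) MeasureTheory.volume a b :=
    fun ℓ _ =>
      (continuousOn_const.mul ((continuousOn_const.mul (hF.pow _)).mul hf)).intervalIntegrable
  calc _ = ∫ x in a..b, ∑ ℓ ∈ Finset.Ioc i n, c ℓ * (((i : ℝ) + 1) *
        ℓ.choose (i + 1) * (∫ y in a..x, f y) ^ (ℓ - (i + 1)) * f x) := by
        simp only [Finset.mul_sum, Finset.sum_mul]
        congr with x
        exact Finset.sum_congr rfl fun ℓ _ => by ring
    _ = _ := by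
      rw [integral_finsetSum hterm]
      refine Finset.sum_congr rfl fun ℓ hℓ => ?_
      rw [integral_const_mul, integral_choose_mul_primitive_pow_mul hf (Finset.mem_Ioc.1 hℓ).1]
      ring

end Primitive

theorem continuousOn_mul_exp_neg_primitive_div {s m A : ℝ → ℝ} {a b : ℝ}
    (hs : ContinuousOn s (uIcc a b)) (hm : ContinuousOn m (uIcc a b))
    (hm0 : ∀ τ ∈ uIcc a b, m τ ≠ 0) (hA : ∀ t, A t = Real.exp (-∫ τ in a..t, (1 + s τ) / m τ)) :
    ContinuousOn (fun τ => s τ * A τ / m τ) (uIcc a b) := by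
  have hprim : ContinuousOn (fun t => ∫ τ in a..t, (1 + s τ) / m τ) (uIcc a b) :=
    continuousOn_primitive_interval
      (((continuousOn_const.add hs).div hm hm0).integrableOn_compact isCompact_uIcc)
  have hAc : ContinuousOn A (uIcc a b) :=
    (Real.continuous_exp.comp_continuousOn hprim.neg).congr fun τ _ => hA τ
  exact (hs.mul hAc).div hm hm0

theorem recursion_solution_general (T : ℝ) (Δ : ℕ) (ζ : ℕ → ℝ)
    (s m : ℝ → ℝ) (hs : ContinuousOn s (Set.Icc 0 T)) (hm : ContinuousOn m (Set.Icc 0 T))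
    (hmpos : ∀ t ∈ Set.Icc (0 : ℝ) T, 0 < m t)
    (A B : ℝ → ℝ)
    (hA : ∀ t, A t = Real.exp (-∫ τ in (0:ℝ)..t, (1 + s τ) / m τ))
    (hB : ∀ t, B t = ∫ τ in (0:ℝ)..t, s τ * A τ / m τ)
    (z : ℕ → ℝ → ℝ)
    (hzΔ : ∀ t ∈ Set.Icc (0 : ℝ) T, z Δ t = ζ Δ * A t ^ Δ)
    (hrec : ∀ i, 1 ≤ i → i < Δ → ∀ t ∈ Set.Icc (0 : ℝ) T,
      z i t = A t ^ i *
        (ζ i + ∫ τ in (0:ℝ)..t, ((i : ℝ) + 1) * s τ * z (i + 1) τ / (m τ * A τ ^ i))) :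
    ∀ i ∈ Finset.Icc 1 Δ, ∀ t ∈ Set.Icc (0 : ℝ) T,
      z i t = A t ^ i * ∑ ℓ ∈ Finset.Icc i Δ, ζ ℓ * (ℓ.choose i : ℝ) * B t ^ (ℓ - i) := by
  have hsub : ∀ t ∈ Icc 0 T, uIcc 0 t ⊆ Icc 0 T := fun t ht => by
    rw [uIcc_of_le ht.1]; exact Icc_subset_Icc_right ht.2
  have hA0 : ∀ t, A t ≠ 0 := fun t => hA t ▸ (Real.exp_pos _).ne'
  have hm0 : ∀ t ∈ Icc 0 T, m t ≠ 0 := fun t ht => (hmpos t ht).ne'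
  obtain rfl : B = fun t => ∫ τ in (0:ℝ)..t, s τ * A τ / m τ := funext hB
  intro i hi
  rw [Finset.mem_Icc] at hi
  obtain ⟨hi1, hiΔ⟩ := hi
  induction hiΔ using Nat.decreasingInduction with
  | self => intro t ht; simp [hzΔ t ht, mul_comm]
  | of_succ i hlt ih =>
    intro t ht
    have hint : ∫ τ in (0:ℝ)..t, ((i : ℝ) + 1) * s τ * z (i + 1) τ / (m τ * A τ ^ i)
        = ∑ ℓ ∈ Finset.Ioc i Δ,
            ζ ℓ * ℓ.choose i * (∫ τ in (0:ℝ)..t, s τ * A τ / m τ) ^ (ℓ - i) := by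
      rw [← integral_sum_choose_primitive_pow_mul (continuousOn_mul_exp_neg_primitive_div
        (hs.mono (hsub t ht)) (hm.mono (hsub t ht)) (fun τ hτ => hm0 τ (hsub t ht hτ)) hA)]
      refine integral_congr fun τ hτ => ?_
      have hAτ := hA0 τ
      have hmτ := hm0 τ (hsub t ht hτ)
      simp only [ih (by omega) τ (hsub t ht hτ), Finset.Icc_add_one_left_eq_Ioc]
      field_simp
      ring
    rw [hrec i hi1 hlt t ht, hint, ← Finset.add_sum_Ioc_eq_sum_Icc hlt.le]
    simp

/-- solving the recursion. With `A(t) = exp(−∫₀ᵗ (1+s)/m)` and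
`B(t) = ∫₀ᵗ s·A/m`, if `z_Δ = ζ_Δ·A^Δ` and for `1 ≤ i < Δ`
`z_i(t) = A(t)^i (ζ_i + ∫₀ᵗ (i+1)·s·z_{i+1}/(m·A^i))`, then
`z_i(t) = A(t)^i ∑_{ℓ=i}^Δ ζ_ℓ C(ℓ,i) B(t)^{ℓ-i}` for all `1 ≤ i ≤ Δ`. -/
theorem recursion_solution (T : ℝ) (hT : 0 < T) (Δ : ℕ) (hΔ : 2 ≤ Δ) (ζ : ℕ → ℝ)
    (s m : ℝ → ℝ) (hs : ContinuousOn s (Set.Icc 0 T)) (hm : ContinuousOn m (Set.Icc 0 T))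
    (hmpos : ∀ t ∈ Set.Icc (0 : ℝ) T, 0 < m t)
    (A B : ℝ → ℝ)
    (hA : ∀ t, A t = Real.exp (-∫ τ in (0:ℝ)..t, (1 + s τ) / m τ))
    (hB : ∀ t, B t = ∫ τ in (0:ℝ)..t, s τ * A τ / m τ)
    (z : ℕ → ℝ → ℝ)
    (hzΔ : ∀ t ∈ Set.Icc (0 : ℝ) T, z Δ t = ζ Δ * A t ^ Δ)
    (hrec : ∀ i, 1 ≤ i → i < Δ → ∀ t ∈ Set.Icc (0 : ℝ) T,
      z i t = A t ^ i *
        (ζ i + ∫ τ in (0:ℝ)..t, ((i : ℝ) + 1) * s τ * z (i + 1) τ / (m τ * A τ ^ i))) :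
    ∀ i ∈ Finset.Icc 1 Δ, ∀ t ∈ Set.Icc (0 : ℝ) T,
      z i t = A t ^ i * ∑ ℓ ∈ Finset.Icc i Δ, ζ ℓ * (ℓ.choose i : ℝ) * B t ^ (ℓ - i) :=
  recursion_solution_general T Δ ζ s m hs hm hmpos A B hA hB z hzΔ hrec
end
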